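/- Let ℓ ∈ ℕ, let j, K̃ be integers with j ≤ 2Jℓ and 4J ≤ K̃ ≤ 2ℓ. Then the number of configurations X ∈ S_{Λ_ℓ}^j with B(m_X) ≤ K̃ satisfies #{X ∈ S_{Λ_ℓ}^j : B(m_X) ≤ K̃} ≤ (4Je)^{K̃−2} ℓ^{2K̃−3}. -/

import Mathlib

open scoped Classical

/-- The occupation function `m_X : {1,…,ℓ} → ℕ` of a tuple `X` with values in `Fin ℓ`
(site `i ∈ {1,…,ℓ}` corresponds to `⟨i-1⟩ : Fin ℓ`): `m_X(i) = #{r : x_r = i}`. -/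
noncomputable def occt {L N : ℕ} (X : Fin N → Fin L) : ℕ → ℕ :=
  fun s => (Finset.univ.filter (fun i => (X i : ℕ) + 1 = s)).card

/-- `X ∈ S_{Λ_ℓ}^j`: nondecreasing and no site occupied by more than `2J` particles. -/
def isConf (twoJ : ℕ) {L N : ℕ} (X : Fin N → Fin L) : Prop :=
  Monotone X ∧ ∀ (k : ℕ) (hk : k < N) (h : k + twoJ < N),
    (X ⟨k, hk⟩ : ℕ) + 1 ≤ (X ⟨k + twoJ, h⟩ : ℕ)

/-- The set `S_{Λ_ℓ}^j` as a finset. -/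
noncomputable def confs (twoJ L N : ℕ) : Finset (Fin N → Fin L) :=
  Finset.univ.filter (fun X => isConf twoJ X)

/-- The block count
`B(m) = #{i ∈ {1,…,ℓ−1} : m(i)+m(i+1) ∉ {0, 4J}} + (2 − δ_{m(1),0} − δ_{m(ℓ),0})`. -/
def blockCount (twoJ L : ℕ) (m : ℕ → ℕ) : ℕ :=
  ((Finset.Icc 1 (L - 1)).filter
      (fun i => ¬(m i + m (i + 1) = 0 ∨ m i + m (i + 1) = 2 * twoJ))).card
    + (2 - (if m 1 = 0 then 1 else 0) - (if m L = 0 then 1 else 0))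

/-!
A configuration is a sorted tuple, so it is determined by its occupation function `m`. Since
`m ≤ 2J`, wherever `m i + m (i + 1) ∈ {0, 4J}` the value `m (i + 1)` is forced by `m i`; hence
`m` is determined by `m 1` together with the pairs `(i, m (i + 1))` at the at most `K̃` other
sites `i ∈ [1, ℓ - 1]`. This leaves at most `(2J + 1) ∑_{t ≤ K̃} C((ℓ - 1)(2J + 1), t)`
configurations. For `K̃ ≥ 4` the bound `K̃! C(n, t) ≤ n^K̃` (for `t ≤ K̃ ≤ n`) reduces the sum
to its top term, which is at most `(8J)^(K̃-2) ℓ^(2K̃-3)`; for `K̃ = 3` the sum is computed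
directly. For `K̃ = 2` (so `2J = 1`) the occupied sites form a single run, fixed by its first
site. Finally `8J ≤ 4Je`.
-/

theorem count_ofFn_eq_card_filter {α : Type*} [DecidableEq α] {n : ℕ} (f : Fin n → α) (a : α) :
    (List.ofFn f).count a = (Finset.univ.filter (fun i => f i = a)).card := by
  rw [← Multiset.coe_count, ← Fin.univ_val_map, Multiset.count_map, Finset.card_def,
    Finset.filter_val]
  simp only [eq_comm]

section Occupation

variable {c L N : ℕ}

theorem occt_eq_zero_iff (X : Fin N → Fin L) (s : ℕ) :
    occt X s = 0 ↔ ∀ i, (X i : ℕ) + 1 ≠ s := by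
  simp [occt, Finset.filter_eq_empty_iff]

theorem occt_val_add_one_pos (X : Fin N → Fin L) (i : Fin N) : 0 < occt X ((X i : ℕ) + 1) :=
  Nat.pos_of_ne_zero fun h => (occt_eq_zero_iff X _).mp h i rfl

theorem occt_zero (X : Fin N → Fin L) : occt X 0 = 0 :=
  (occt_eq_zero_iff X 0).mpr fun _ => Nat.succ_ne_zero _

theorem occt_eq_zero_of_lt (X : Fin N → Fin L) {s : ℕ} (hs : L < s) : occt X s = 0 :=
  (occt_eq_zero_iff X s).mpr fun i => by have := (X i).isLt; omega

theorem occt_le_of_isConf {X : Fin N → Fin L} (hX : isConf c X) (s : ℕ) : occt X s ≤ c := by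
  set S := Finset.univ.filter (fun i => (X i : ℕ) + 1 = s) with hS
  rcases S.eq_empty_or_nonempty with hempty | hne
  · simp [occt, ← hS, hempty]
  -- the fibre is an interval of indices starting at its minimum `r`, of length at most `c`
  set r := S.min' hne
  have hr : (X r : ℕ) + 1 = s := (Finset.mem_filter.mp (S.min'_mem hne)).2
  have hsub : S.map Fin.valEmbedding ⊆ Finset.Ico (r : ℕ) (r + c) := by
    intro n hn
    obtain ⟨i, hi, rfl⟩ := Finset.mem_map.mp hn
    refine Finset.mem_Ico.mpr ⟨S.min'_le i hi, ?_⟩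
    by_contra hge
    have hrc : (r : ℕ) + c < N := lt_of_le_of_lt (not_lt.mp hge) i.isLt
    have hgap : (X r : ℕ) + 1 ≤ X ⟨r + c, hrc⟩ := hX.2 r r.isLt hrc
    have hmono : X ⟨r + c, hrc⟩ ≤ X i := hX.1 (Fin.le_def.mpr (not_lt.mp hge))
    have hi' : (X i : ℕ) + 1 = s := (Finset.mem_filter.mp hi).2
    rw [Fin.le_def] at hmono
    omega
  simpa [occt, ← hS] using Finset.card_le_card hsub

theorem eq_of_occt_eq {X Y : Fin N → Fin L} (hX : Monotone X) (hY : Monotone Y)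
    (h : occt X = occt Y) : X = Y := by
  have hcount : ∀ v : Fin L, (List.ofFn X).count v = (List.ofFn Y).count v := by
    intro v
    have := congrFun h (v + 1)
    simp only [occt, Fin.val_inj, add_left_inj] at this
    simpa [count_ofFn_eq_card_filter] using this
  exact List.ofFn_injective ((List.perm_iff_count.mpr hcount).eq_of_sortedLE
    (List.sortedLE_ofFn_iff.mpr hX) (List.sortedLE_ofFn_iff.mpr hY))

end Occupation

theorem card_powerset_filter_card_le_le_sum_choose {α : Type*} (s : Finset α) (K : ℕ) :
    (s.powerset.filter (fun A => A.card ≤ K)).card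
      ≤ ∑ t ∈ Finset.range (K + 1), s.card.choose t := by
  have hsub : s.powerset.filter (fun A => A.card ≤ K)
      ⊆ (Finset.range (K + 1)).biUnion (fun t => Finset.powersetCard t s) := by
    intro A hA
    rw [Finset.mem_filter, Finset.mem_powerset] at hA
    exact Finset.mem_biUnion.mpr ⟨A.card, Finset.mem_range.mpr (by omega),
      Finset.mem_powersetCard.mpr ⟨hA.1, rfl⟩⟩
  calc _ ≤ _ := Finset.card_le_card hsub
    _ ≤ _ := Finset.card_biUnion_le
    _ = _ := by simp only [Finset.card_powersetCard]

section Encoding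

def transSet (c L : ℕ) (m : ℕ → ℕ) : Finset ℕ :=
  (Finset.Icc 1 (L - 1)).filter (fun i => ¬(m i + m (i + 1) = 0 ∨ m i + m (i + 1) = 2 * c))

def encode (c L : ℕ) (m : ℕ → ℕ) : Finset (ℕ × ℕ) × ℕ :=
  ((transSet c L m).image (fun i => (i, m (i + 1))), m 1)

variable {c L : ℕ}

theorem card_transSet_le_blockCount (m : ℕ → ℕ) : (transSet c L m).card ≤ blockCount c L m :=
  Nat.le_add_right _ _

theorem mem_transSet_of_encode_eq {m m' : ℕ → ℕ} (h : encode c L m = encode c L m') {i : ℕ}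
    (hi : i ∈ transSet c L m) : i ∈ transSet c L m' ∧ m' (i + 1) = m (i + 1) := by
  have hmem : (i, m (i + 1)) ∈ (encode c L m').1 := h ▸ Finset.mem_image_of_mem _ hi
  obtain ⟨i', hi', heq⟩ := Finset.mem_image.mp hmem
  obtain ⟨rfl, hval⟩ := Prod.ext_iff.mp heq
  exact ⟨hi', hval⟩

theorem eq_of_encode_eq {m m' : ℕ → ℕ} (hm : ∀ s, m s ≤ c) (hm' : ∀ s, m' s ≤ c)
    (hmL : ∀ s, L < s → m s = 0) (hm'L : ∀ s, L < s → m' s = 0) (h0 : m 0 = m' 0)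
    (h : encode c L m = encode c L m') : m = m' := by
  have hT : ∀ i, i ∈ transSet c L m ↔ i ∈ transSet c L m' := fun i =>
    ⟨fun hi => (mem_transSet_of_encode_eq h hi).1,
      fun hi => (mem_transSet_of_encode_eq h.symm hi).1⟩
  have hsucc : ∀ s, m (s + 1) = m' (s + 1) := by
    intro s
    induction s with
    | zero => exact congrArg Prod.snd h
    | succ i ih =>
      by_cases hiL : L < i + 2
      · rw [hmL _ hiL, hm'L _ hiL]
      by_cases hiT : i + 1 ∈ transSet c L m
      · exact (mem_transSet_of_encode_eq h hiT).2.symm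
      have hiT' : i + 1 ∉ transSet c L m' := (hT _).not.mp hiT
      have hIcc : i + 1 ∈ Finset.Icc 1 (L - 1) := Finset.mem_Icc.mpr ⟨by omega, by omega⟩
      simp only [transSet, Finset.mem_filter, hIcc, true_and, not_not] at hiT hiT'
      have := hm (i + 1 + 1)
      have := hm' (i + 1 + 1)
      omega
  funext s
  cases s with
  | zero => exact h0
  | succ s => exact hsucc s

theorem card_filter_blockCount_le_sum_choose (N K : ℕ) :
    ((confs c L N).filter (fun X => blockCount c L (occt X) ≤ K)).card
      ≤ (c + 1) * ∑ t ∈ Finset.range (K + 1), ((L - 1) * (c + 1)).choose t := by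
  set base := Finset.Icc 1 (L - 1) ×ˢ Finset.range (c + 1)
  have hbase : base.card = (L - 1) * (c + 1) := by simp [base]
  have hmaps : ∀ X ∈ (confs c L N).filter (fun X => blockCount c L (occt X) ≤ K),
      encode c L (occt X)
        ∈ (base.powerset.filter (fun A => A.card ≤ K)) ×ˢ Finset.range (c + 1) := by
    intro X hX
    obtain ⟨hXconf, hXB⟩ := Finset.mem_filter.mp hX
    have hcap := occt_le_of_isConf (Finset.mem_filter.mp hXconf).2
    refine Finset.mem_product.mpr ⟨Finset.mem_filter.mpr ⟨?_, ?_⟩, ?_⟩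
    · refine Finset.mem_powerset.mpr fun p hp => ?_
      obtain ⟨i, hi, rfl⟩ := Finset.mem_image.mp hp
      exact Finset.mem_product.mpr
        ⟨(Finset.mem_filter.mp hi).1, Finset.mem_range.mpr (Nat.lt_succ_of_le (hcap _))⟩
    · exact Finset.card_image_le.trans ((card_transSet_le_blockCount _).trans hXB)
    · exact Finset.mem_range.mpr (Nat.lt_succ_of_le (hcap 1))
  have hinj : Set.InjOn (fun X : Fin N → Fin L => encode c L (occt X))
      ((confs c L N).filter (fun X => blockCount c L (occt X) ≤ K) : Set (Fin N → Fin L)) := by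
    intro X hX Y hY h
    have hX := (Finset.mem_filter.mp (Finset.mem_filter.mp hX).1).2
    have hY := (Finset.mem_filter.mp (Finset.mem_filter.mp hY).1).2
    exact eq_of_occt_eq hX.1 hY.1 (eq_of_encode_eq (occt_le_of_isConf hX) (occt_le_of_isConf hY)
      (fun _ => occt_eq_zero_of_lt X) (fun _ => occt_eq_zero_of_lt Y)
      ((occt_zero X).trans (occt_zero Y).symm) h)
  calc _ ≤ _ := Finset.card_le_card_of_injOn _ hmaps hinj
    _ ≤ _ := by
      rw [Finset.card_product, Finset.card_range, mul_comm, ← hbase]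
      exact Nat.mul_le_mul_left _ (card_powerset_filter_card_le_le_sum_choose base K)

end Encoding

section TwoBlocks

variable {c L N : ℕ}

theorem blockCount_eq_card_filter_range {m : ℕ → ℕ} (hc : 1 ≤ c) (hL : 1 ≤ L)
    (hm : ∀ s, m s ≤ c) (h0 : m 0 = 0) (hL1 : m (L + 1) = 0) :
    blockCount c L m = ((Finset.range (L + 1)).filter
      (fun i => ¬(m i + m (i + 1) = 0 ∨ m i + m (i + 1) = 2 * c))).card := by
  have hrange : Finset.range (L + 1) = insert 0 (insert L (Finset.Icc 1 (L - 1))) := by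
    ext i; simp only [Finset.mem_range, Finset.mem_insert, Finset.mem_Icc]; omega
  have h1 := hm 1
  have hLc := hm L
  have h0L : 0 ∉ insert L (Finset.Icc 1 (L - 1)) := by simp; omega
  have hLI : L ∉ Finset.Icc 1 (L - 1) := by simp; omega
  rw [hrange, Finset.card_filter, Finset.sum_insert h0L, Finset.sum_insert hLI,
    ← Finset.card_filter, blockCount]
  simp only [h0, hL1, zero_add, add_zero]
  split_ifs <;> omega

/-- A gap after the `r`-th particle is a transition, besides those next to the first and the last
particle. -/
theorem three_le_blockCount_of_gap {X : Fin N → Fin L} (hX : isConf 1 X) {r : ℕ}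
    (hr : r + 1 < N) (hgap : (X ⟨r, by omega⟩ : ℕ) + 2 ≤ X ⟨r + 1, hr⟩) :
    3 ≤ blockCount 1 L (occt X) := by
  have hN : 0 < N := by omega
  have hr' : r < N := by omega
  have hlast : N - 1 < N := by omega
  have hmono : ∀ i j : Fin N, (i : ℕ) ≤ j → (X i : ℕ) ≤ X j := fun i j h => hX.1 h
  have hcap := occt_le_of_isConf hX
  have hx : occt X (X ⟨0, hN⟩) = 0 := (occt_eq_zero_iff X _).mpr fun i => by
    have := hmono ⟨0, hN⟩ i (Nat.zero_le _)
    omega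
  have ha : occt X (X ⟨r, hr'⟩ + 1 + 1) = 0 := (occt_eq_zero_iff X _).mpr fun i => by
    rcases Nat.lt_or_ge (i : ℕ) (r + 1) with hi | hi
    · have := hmono i ⟨r, hr'⟩ (by simp only; omega); omega
    · have := hmono ⟨r + 1, hr⟩ i hi; omega
  have hb : occt X (X ⟨N - 1, hlast⟩ + 1 + 1) = 0 := (occt_eq_zero_iff X _).mpr fun i => by
    have := hmono i ⟨N - 1, hlast⟩ (by simp only; omega); omega
  have hx1 := occt_val_add_one_pos X ⟨0, hN⟩
  have ha0 := occt_val_add_one_pos X ⟨r, hr'⟩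
  have hb0 := occt_val_add_one_pos X ⟨N - 1, hlast⟩
  have hxa := hmono ⟨0, hN⟩ ⟨r, hr'⟩ (Nat.zero_le _)
  have hab := hmono ⟨r + 1, hr⟩ ⟨N - 1, hlast⟩ (by simp only; omega)
  have hbL := (X ⟨N - 1, hlast⟩).isLt
  have hsub : ({(X ⟨0, hN⟩ : ℕ), (X ⟨r, hr'⟩ : ℕ) + 1, (X ⟨N - 1, hlast⟩ : ℕ) + 1} : Finset ℕ)
      ⊆ (Finset.range (L + 1)).filter (fun i =>
        ¬(occt X i + occt X (i + 1) = 0 ∨ occt X i + occt X (i + 1) = 2 * 1)) := by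
    intro i hi
    simp only [Finset.mem_insert, Finset.mem_singleton] at hi
    have := hcap (X ⟨0, hN⟩ + 1)
    have := hcap (X ⟨r, hr'⟩ + 1)
    have := hcap (X ⟨N - 1, hlast⟩ + 1)
    rcases hi with rfl | rfl | rfl <;> simp only [Finset.mem_filter, Finset.mem_range] <;> omega
  have h3 := Finset.card_le_card hsub
  rwa [Finset.card_insert_of_notMem (by simp; omega), Finset.card_pair (by omega),
    ← blockCount_eq_card_filter_range le_rfl (Fin.pos (X ⟨0, hN⟩)) hcap (occt_zero X)
      (occt_eq_zero_of_lt X (Nat.lt_succ_self L))] at h3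

theorem val_eq_val_zero_add_of_blockCount_le_two {X : Fin N → Fin L} (hX : isConf 1 X)
    (hB : blockCount 1 L (occt X) ≤ 2) (hN : 0 < N) (r : ℕ) (hr : r < N) :
    (X ⟨r, hr⟩ : ℕ) = X ⟨0, hN⟩ + r := by
  induction r with
  | zero => rfl
  | succ r ih =>
    have hstep : (X ⟨r, by omega⟩ : ℕ) + 1 ≤ X ⟨r + 1, hr⟩ := hX.2 r (by omega) hr
    by_contra hne
    have := three_le_blockCount_of_gap hX hr (by have := ih (by omega); omega)
    omega

end TwoBlocks

section Estimates

open scoped Nat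

theorem factorial_mul_choose_le_pow (n t : ℕ) : t ! * n.choose t ≤ n ^ t := by
  rw [← Nat.descFactorial_eq_factorial_mul_choose]
  exact Nat.descFactorial_le_pow n t

theorem factorial_mul_choose_le_pow_of_le {n m t K : ℕ} (ht : t ≤ K) (hK : K ≤ m) (hn : n ≤ m) :
    K ! * n.choose t ≤ m ^ K := by
  have hfac : K ! ≤ t ! * K ^ (K - t) := by
    calc K ! = (K - (K - t))! * K.descFactorial (K - t) :=
          (Nat.factorial_mul_descFactorial (by omega)).symm
      _ ≤ t ! * K ^ (K - t) := by
        rw [show K - (K - t) = t by omega]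
        exact Nat.mul_le_mul_left _ (Nat.descFactorial_le_pow K _)
  calc K ! * n.choose t ≤ t ! * K ^ (K - t) * n.choose t := Nat.mul_le_mul_right _ hfac
    _ = K ^ (K - t) * (t ! * n.choose t) := by ring
    _ ≤ m ^ (K - t) * m ^ t := Nat.mul_le_mul (Nat.pow_le_pow_left hK _)
        ((factorial_mul_choose_le_pow n t).trans (Nat.pow_le_pow_left hn _))
    _ = m ^ K := by rw [← pow_add, Nat.sub_add_cancel ht]

theorem factorial_mul_sum_choose_le {n m K : ℕ} (hK : K ≤ m) (hn : n ≤ m) :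
    K ! * ∑ t ∈ Finset.range (K + 1), n.choose t ≤ (K + 1) * m ^ K := by
  rw [Finset.mul_sum]
  calc _ ≤ ∑ _t ∈ Finset.range (K + 1), m ^ K := Finset.sum_le_sum fun t ht =>
        factorial_mul_choose_le_pow_of_le (Nat.lt_succ_iff.mp (Finset.mem_range.mp ht)) hK hn
    _ = _ := by rw [Finset.sum_const, Finset.card_range, smul_eq_mul]

theorem succ_mul_add_two_sq_le_two_pow_mul_factorial {K : ℕ} (hK : 4 ≤ K) :
    (K + 1) * (K + 2) ^ 2 ≤ 2 ^ (K - 1) * K ! := by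
  induction K, hK using Nat.le_induction with
  | base => decide
  | succ K hK ih =>
    rw [show K + 1 - 1 = K - 1 + 1 by omega, pow_succ, Nat.factorial_succ]
    have h : (K + 3) ^ 2 ≤ 2 * (K + 1) * (K + 2) := by nlinarith
    calc (K + 1 + 1) * (K + 1 + 2) ^ 2 = (K + 2) * (K + 3) ^ 2 := by ring
      _ ≤ (K + 2) * (2 * (K + 1) * (K + 2)) * (K + 1) :=
          Nat.le_mul_of_pos_right _ (by omega) |>.trans' (Nat.mul_le_mul_left _ h)
      _ = 2 * (K + 1) * ((K + 1) * (K + 2) ^ 2) := by ring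
      _ ≤ 2 * (K + 1) * (2 ^ (K - 1) * K !) := Nat.mul_le_mul_left _ ih
      _ = _ := by ring

theorem succ_mul_pow_le_factorial_mul {c K ℓ : ℕ} (hc : 1 ≤ c) (hK : 4 ≤ K) (hcK : 2 * c ≤ K)
    (hKℓ : K ≤ 2 * ℓ) :
    (K + 1) * ((c + 1) ^ (K + 1) * ℓ ^ K) ≤ K ! * ((4 * c) ^ (K - 2) * ℓ ^ (2 * K - 3)) := by
  have hpow : (c + 1) ^ (K + 1) = (c + 1) ^ (K - 2) * (c + 1) ^ 2 * (c + 1) := by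
    rw [← pow_add, ← pow_succ]; congr 1; omega
  have h4c : (4 * c) ^ (K - 2) = 2 ^ (K - 2) * (2 * c) ^ (K - 2) := by
    rw [← mul_pow]; ring_nf
  have h2 : 2 ^ (K - 1) = 2 * 2 ^ (K - 2) := by rw [← _root_.pow_succ']; congr 1; omega
  have hc1 : (c + 1) ^ (K - 2) ≤ (2 * c) ^ (K - 2) := Nat.pow_le_pow_left (by omega) _
  have hc2 : 4 * (c + 1) ^ 2 ≤ (K + 2) ^ 2 := by nlinarith
  have hc3 : c + 1 ≤ 2 * ℓ := by omega
  have hℓ : ℓ ^ K * ℓ ≤ ℓ ^ (2 * K - 3) := by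
    rw [← pow_succ]; exact Nat.pow_le_pow_right (by omega) (by omega)
  have key := succ_mul_add_two_sq_le_two_pow_mul_factorial hK
  refine Nat.le_of_mul_le_mul_left ?_ (show 0 < 4 by norm_num)
  calc 4 * ((K + 1) * ((c + 1) ^ (K + 1) * ℓ ^ K))
      = (K + 1) * (c + 1) ^ (K - 2) * (4 * (c + 1) ^ 2) * (c + 1) * ℓ ^ K := by rw [hpow]; ring
    _ ≤ (K + 1) * (2 * c) ^ (K - 2) * (K + 2) ^ 2 * (2 * ℓ) * ℓ ^ K := by gcongr
    _ = 2 * ((K + 1) * (K + 2) ^ 2) * (2 * c) ^ (K - 2) * (ℓ ^ K * ℓ) := by ring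
    _ ≤ 2 * (2 ^ (K - 1) * K !) * (2 * c) ^ (K - 2) * ℓ ^ (2 * K - 3) := by gcongr
    _ = 4 * (K ! * ((4 * c) ^ (K - 2) * ℓ ^ (2 * K - 3))) := by rw [h4c, h2]; ring

theorem succ_mul_sum_choose_le_of_four_le {c K ℓ : ℕ} (hc : 1 ≤ c) (hK : 4 ≤ K)
    (hcK : 2 * c ≤ K) (hKℓ : K ≤ 2 * ℓ) :
    (c + 1) * ∑ t ∈ Finset.range (K + 1), ((ℓ - 1) * (c + 1)).choose t
      ≤ (4 * c) ^ (K - 2) * ℓ ^ (2 * K - 3) := by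
  have hsum := factorial_mul_sum_choose_le (n := (ℓ - 1) * (c + 1)) (m := ℓ * (c + 1))
    (K := K) (by nlinarith) (Nat.mul_le_mul_right _ (Nat.sub_le ℓ 1))
  refine Nat.le_of_mul_le_mul_left ?_ (Nat.factorial_pos K)
  calc K ! * ((c + 1) * ∑ t ∈ Finset.range (K + 1), ((ℓ - 1) * (c + 1)).choose t)
      ≤ (c + 1) * ((K + 1) * (ℓ * (c + 1)) ^ K) := by
        rw [mul_left_comm]; exact Nat.mul_le_mul_left _ hsum
    _ = (K + 1) * ((c + 1) ^ (K + 1) * ℓ ^ K) := by rw [mul_pow]; ring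
    _ ≤ _ := succ_mul_pow_le_factorial_mul hc hK hcK hKℓ

theorem two_mul_sum_choose_le {ℓ : ℕ} (hℓ : 1 ≤ ℓ) :
    2 * ∑ t ∈ Finset.range 4, ((ℓ - 1) * 2).choose t ≤ 4 * ℓ ^ 3 := by
  obtain ⟨x, rfl⟩ : ∃ x, ℓ = x + 1 := ⟨ℓ - 1, by omega⟩
  have h2 := factorial_mul_choose_le_pow ((x + 1 - 1) * 2) 2
  have h3 := factorial_mul_choose_le_pow ((x + 1 - 1) * 2) 3
  simp only [Finset.sum_range_succ, Finset.sum_range_zero, Nat.choose_zero_right,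
    Nat.choose_one_right, Nat.add_sub_cancel] at h2 h3 ⊢
  norm_num [Nat.factorial] at h2 h3
  nlinarith

end Estimates

theorem card_filter_blockCount_le_two_le {L N : ℕ} (hL : 1 ≤ L) :
    ((confs 1 L N).filter (fun X => blockCount 1 L (occt X) ≤ 2)).card ≤ L := by
  rcases Nat.eq_zero_or_pos N with rfl | hN
  · exact (Finset.card_le_univ _).trans (by simpa using hL)
  have hinj : Set.InjOn (fun X : Fin N → Fin L => X ⟨0, hN⟩)
      ((confs 1 L N).filter (fun X => blockCount 1 L (occt X) ≤ 2) : Set (Fin N → Fin L)) := by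
    intro X hX Y hY h
    obtain ⟨hXconf, hXB⟩ := Finset.mem_filter.mp hX
    obtain ⟨hYconf, hYB⟩ := Finset.mem_filter.mp hY
    funext i
    have hXi := val_eq_val_zero_add_of_blockCount_le_two
      (Finset.mem_filter.mp hXconf).2 hXB hN i i.isLt
    have hYi := val_eq_val_zero_add_of_blockCount_le_two
      (Finset.mem_filter.mp hYconf).2 hYB hN i i.isLt
    simp only [Fin.eta] at hXi hYi
    exact Fin.ext (by rw [hXi, hYi, show X ⟨0, hN⟩ = Y ⟨0, hN⟩ from h])
  simpa using Finset.card_le_card_of_injOn _ (fun X _ => Finset.mem_univ (X ⟨0, hN⟩)) hinj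

theorem card_filter_blockCount_le_pow {c L N K : ℕ} (hc : 1 ≤ c) (hcK : 2 * c ≤ K)
    (hKL : K ≤ 2 * L) :
    ((confs c L N).filter (fun X => blockCount c L (occt X) ≤ K)).card
      ≤ (4 * c) ^ (K - 2) * L ^ (2 * K - 3) := by
  rcases (show K = 2 ∨ K = 3 ∨ 4 ≤ K by omega) with rfl | rfl | hK
  · obtain rfl : c = 1 := by omega
    simpa using card_filter_blockCount_le_two_le (N := N) (by omega : 1 ≤ L)
  · obtain rfl : c = 1 := by omega
    exact (card_filter_blockCount_le_sum_choose N 3).trans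
      (by simpa using two_mul_sum_choose_le (by omega : 1 ≤ L))
  · exact (card_filter_blockCount_le_sum_choose N K).trans
      (succ_mul_sum_choose_le_of_four_le hc hK hcK hKL)

theorem card_low_block_configs_le_general (twoJ ℓ j Kt : ℕ) (h2J : 0 < twoJ)
    (hK1 : 2 * twoJ ≤ Kt) (hK2 : Kt ≤ 2 * ℓ) :
    (((confs twoJ ℓ j).filter (fun X => blockCount twoJ ℓ (occt X) ≤ Kt)).card : ℝ)
      ≤ (2 * (twoJ : ℝ) * Real.exp 1) ^ (Kt - 2) * (ℓ : ℝ) ^ (2 * Kt - 3) := by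
  have hcount := card_filter_blockCount_le_pow (N := j) h2J hK1 hK2
  have hbase : 4 * (twoJ : ℝ) ≤ 2 * twoJ * Real.exp 1 := by
    have := Real.add_one_le_exp (1 : ℝ)
    nlinarith [(Nat.cast_pos.mpr h2J : (0 : ℝ) < twoJ)]
  calc _ ≤ ((4 * twoJ : ℕ) : ℝ) ^ (Kt - 2) * (ℓ : ℝ) ^ (2 * Kt - 3) := by
        exact_mod_cast hcount
    _ ≤ _ := by push_cast; gcongr

/-- the number of configurations `X ∈ S_{Λ_ℓ}^j` composed of at most
`K̃ − 1` building blocks (i.e. with `B(m_X) ≤ K̃`) is at most `(4Je)^{K̃−2} ℓ^{2K̃−3}`. -/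
theorem card_low_block_configs_le (twoJ ℓ j Kt : ℕ) (h2J : 0 < twoJ)
    (hj : j ≤ twoJ * ℓ) (hK1 : 2 * twoJ ≤ Kt) (hK2 : Kt ≤ 2 * ℓ) :
    (((confs twoJ ℓ j).filter (fun X => blockCount twoJ ℓ (occt X) ≤ Kt)).card : ℝ)
      ≤ (2 * (twoJ : ℝ) * Real.exp 1) ^ (Kt - 2) * (ℓ : ℝ) ^ (2 * Kt - 3) :=
  card_low_block_configs_le_general twoJ ℓ j Kt h2J hK1 hK2
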